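/- The Wriggle Polynomial W_K(t) = Σ_{c∈C} sign(c)·t^{W(L_c)} − writhe(K) is invariant under the two oriented Reidemeister II moves; that is, the two crossings a, b created by an RII move satisfy sign(a) = −sign(b) and W(L_a) = W(L_b), so their net contribution to the state sum is zero. -/

import Mathlib

/-!
`W(L_c)` is a sum over the chords `d` of a term that is `± sign d` when `d` crosses `c`
and `0` otherwise. Transposing `a` and `b` matches the terms of `W(L_a)` with those of
`W(L_b)`: a chord other than `a, b` contributes equally to both by hypothesis, no chord
crosses itself, and in the mutual terms the over/under pattern flips together with the sign.
-/

open scoped Classical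
open LaurentPolynomial

noncomputable section

/-- A Gauss diagram for an oriented virtual knot with `n` classical crossings: a circle
with `2 * n` marked points (positions in `ZMod (2*n)`, traversed in cyclic order), and for
each crossing `c` a signed oriented chord, recorded by the position `over c` of its
over-passage (head), the position `under c` of its under-passage (tail), and its sign. -/
structure GaussDiagram (n : ℕ) where
  overPos : Fin n → ZMod (2 * n)
  under : Fin n → ZMod (2 * n)
  sign : Fin n → ℤ
  endpoints_inj : Function.Injective
    (fun p : Fin n × Bool => if p.2 then overPos p.1 else under p.1)
  sign_pm : ∀ c, sign c = 1 ∨ sign c = -1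

namespace GaussDiagram

/-- `x` lies strictly inside the arc running forward (in the orientation of the circle)
from `a` to `b`. -/
def Between {m : ℕ} (a b x : ZMod m) : Prop :=
  (x - a).val < (b - a).val ∧ x ≠ a

variable {n : ℕ}

/-- After orientedly smoothing the crossing `c`, the first component of the resulting
2-component link `L_c` (the component carrying the dot placed on the incoming understrand
of `c`) is the arc running forward from the over-passage of `c` to its under-passage. -/
def onComp1 (G : GaussDiagram n) (c : Fin n) (x : ZMod (2 * n)) : Prop :=
  Between (G.overPos c) (G.under c) x

/-- The chords `c` and `d` intersect (interleave): exactly one endpoint of `d` lies in the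
arc cut out by `c`; equivalently `d` becomes a linking crossing of the smoothed link `L_c`. -/
def Crosses (G : GaussDiagram n) (c d : Fin n) : Prop :=
  Xor' (G.onComp1 c (G.overPos d)) (G.onComp1 c (G.under d))

/-- `d ∈ P_c`: `d` intersects `c` positively (traveling along the first component of `L_c`
one passes *over* `d`). -/
def PosAt (G : GaussDiagram n) (c d : Fin n) : Prop :=
  G.Crosses c d ∧ G.onComp1 c (G.overPos d)

/-- `d ∈ N_c`: `d` intersects `c` negatively (traveling along the first component of `L_c`
one passes *under* `d`). -/
def NegAt (G : GaussDiagram n) (c d : Fin n) : Prop :=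
  G.Crosses c d ∧ G.onComp1 c (G.under d)

/-- The wriggle number `W(L_c) = lk_O(L_c) - lk_U(L_c)` of the ordered 2-component link
obtained by the oriented smoothing at `c`. -/
def wriggle (G : GaussDiagram n) (c : Fin n) : ℤ :=
  (∑ d ∈ Finset.univ.filter (fun d => G.PosAt c d), G.sign d)
    - ∑ d ∈ Finset.univ.filter (fun d => G.NegAt c d), G.sign d

/-- The writhe: the sum of the signs of all crossings. -/
def writhe (G : GaussDiagram n) : ℤ := ∑ c, G.sign c

/-- The Wriggle Polynomial `W_K(t) = Σ_c sign(c) · t^{W(L_c)} - writhe(K)`, as a Laurent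
polynomial over `ℤ`. -/
def wrigglePoly (G : GaussDiagram n) : LaurentPolynomial ℤ :=
  (∑ c, C (G.sign c) * T (G.wriggle c)) - C G.writhe

end GaussDiagram

namespace GaussDiagram

variable {n : ℕ} {G : GaussDiagram n} {a b c d : Fin n}

variable (G) in
theorem not_crosses_self (c : Fin n) : ¬ G.Crosses c c := by
  rintro (⟨h, -⟩ | ⟨h, -⟩)
  · exact h.2 rfl
  · exact lt_irrefl _ h.1

theorem PosAt.not_negAt (h : G.PosAt c d) : ¬ G.NegAt c d := fun h' =>
  h.1.elim (fun hx => hx.2 h'.2) (fun hx => hx.2 h.2)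

def wriggleTerm (G : GaussDiagram n) (c d : Fin n) : ℤ :=
  (if G.PosAt c d then G.sign d else 0) - (if G.NegAt c d then G.sign d else 0)

variable (G) in
theorem wriggle_eq_sum_wriggleTerm (c : Fin n) : G.wriggle c = ∑ d, G.wriggleTerm c d := by
  simp only [wriggle, wriggleTerm, Finset.sum_sub_distrib, Finset.sum_filter]

theorem wriggleTerm_of_not_crosses (h : ¬ G.Crosses c d) : G.wriggleTerm c d = 0 := by
  simp [wriggleTerm, PosAt, NegAt, h]

theorem wriggleTerm_of_posAt (h : G.PosAt c d) : G.wriggleTerm c d = G.sign d := by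
  simp [wriggleTerm, h, h.not_negAt]

theorem wriggleTerm_of_negAt (h : G.NegAt c d) : G.wriggleTerm c d = - G.sign d := by
  have : ¬ G.PosAt c d := fun h' => h'.not_negAt h
  simp [wriggleTerm, h, this]

theorem wriggle_eq_of_wriggleTerm
    (hother : ∀ d, d ≠ a → d ≠ b → G.wriggleTerm a d = G.wriggleTerm b d)
    (hmutual : G.wriggleTerm a b = G.wriggleTerm b a) :
    G.wriggle a = G.wriggle b := by
  rw [wriggle_eq_sum_wriggleTerm, wriggle_eq_sum_wriggleTerm]
  refine Fintype.sum_equiv (Equiv.swap a b) _ _ fun d => ?_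
  rcases eq_or_ne d a with rfl | hda
  · rw [Equiv.swap_apply_left, wriggleTerm_of_not_crosses (G.not_crosses_self d),
      wriggleTerm_of_not_crosses (G.not_crosses_self b)]
  rcases eq_or_ne d b with rfl | hdb
  · rwa [Equiv.swap_apply_right]
  · rw [Equiv.swap_apply_of_ne_of_ne hda hdb, hother d hda hdb]

theorem wriggleTerm_comm_of_RII (hsign : G.sign a = - G.sign b)
    (hmut : (¬ G.Crosses a b ∧ ¬ G.Crosses b a) ∨
            (G.PosAt a b ∧ G.NegAt b a) ∨ (G.NegAt a b ∧ G.PosAt b a)) :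
    G.wriggleTerm a b = G.wriggleTerm b a := by
  rcases hmut with ⟨hab, hba⟩ | ⟨hab, hba⟩ | ⟨hab, hba⟩
  · rw [wriggleTerm_of_not_crosses hab, wriggleTerm_of_not_crosses hba]
  · rw [wriggleTerm_of_posAt hab, wriggleTerm_of_negAt hba, hsign, neg_neg]
  · rw [wriggleTerm_of_negAt hab, wriggleTerm_of_posAt hba, hsign]

end GaussDiagram

open GaussDiagram

theorem RII_net_contribution_zero_general {n : ℕ} (G : GaussDiagram n) (a b : Fin n)
    (hsign : G.sign a = - G.sign b)
    (hpos : ∀ d : Fin n, d ≠ a → d ≠ b → (G.PosAt a d ↔ G.PosAt b d))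
    (hneg : ∀ d : Fin n, d ≠ a → d ≠ b → (G.NegAt a d ↔ G.NegAt b d))
    (hmut : (¬ G.Crosses a b ∧ ¬ G.Crosses b a) ∨
            (G.PosAt a b ∧ G.NegAt b a) ∨ (G.NegAt a b ∧ G.PosAt b a)) :
    G.wriggle a = G.wriggle b ∧
      C (G.sign a) * T (G.wriggle a) + C (G.sign b) * T (G.wriggle b)
        = (0 : LaurentPolynomial ℤ) := by
  have hwriggle : G.wriggle a = G.wriggle b := by
    refine wriggle_eq_of_wriggleTerm (fun d hda hdb => ?_) (wriggleTerm_comm_of_RII hsign hmut)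
    simp only [wriggleTerm, hpos d hda hdb, hneg d hda hdb]
  refine ⟨hwriggle, ?_⟩
  rw [hwriggle, hsign, map_neg, neg_mul, neg_add_cancel]

/-- invariance of the Wriggle Polynomial under the oriented Reidemeister II
moves.  In Gauss diagram terms, an RII move creates two chords `a, b` of opposite signs
such that every other chord intersects `a` iff it intersects `b`, with the same
intersection sign, while `a` and `b` either do not intersect each other or intersect each
other with the compensating over/under pattern.  Conclusion: `W(L_a) = W(L_b)`, and since
`sign a = - sign b` the two crossings have net contribution zero to the state sum
`Σ_c sign(c) t^{W(L_c)}`. -/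
theorem RII_net_contribution_zero {n : ℕ} (G : GaussDiagram n) (a b : Fin n)
    (hab : a ≠ b)
    (hsign : G.sign a = - G.sign b)
    (hpos : ∀ d : Fin n, d ≠ a → d ≠ b → (G.PosAt a d ↔ G.PosAt b d))
    (hneg : ∀ d : Fin n, d ≠ a → d ≠ b → (G.NegAt a d ↔ G.NegAt b d))
    (hmut : (¬ G.Crosses a b ∧ ¬ G.Crosses b a) ∨
            (G.PosAt a b ∧ G.NegAt b a) ∨ (G.NegAt a b ∧ G.PosAt b a)) :
    G.wriggle a = G.wriggle b ∧
      C (G.sign a) * T (G.wriggle a) + C (G.sign b) * T (G.wriggle b)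
        = (0 : LaurentPolynomial ℤ) :=
  RII_net_contribution_zero_general G a b hsign hpos hneg hmut
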